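/- arXiv:1007.3707 — 2 statements merged into one kernel-verified Lean document; each statement's English description precedes it below -/
import Mathlib

section
/- Let R = ⊕_{i∈I} 𝔽[∂]u_i be the free Lie conformal algebra with zero λ-bracket (I finite), and let 𝒱 be an algebra of differential functions in the variables u_i. Then the formula u_{i λ} f = Σ_{n≥0} λ^n ∂f/∂u_i^{(n)} defines a structure of an R-module on 𝒱, on which each u_{i λ} acts by derivations of the product of 𝒱. -/
noncomputable section

/-!
Writing `a = ∑ᵢ qᵢ(∂) uᵢ`, sesquilinearity forces `a_λ = ∑ᵢ qᵢ(-λ) u_{iλ}`, and we take this as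
the definition. Every coefficient of `λ^n` is then an `𝔽`-linear combination of the derivations
`∂/∂u_i^{(m)}`, so it is a derivation, and any two of them commute because these do. The
relation `a_λ ∘ ∂ = (∂ + λ) ∘ a_λ` is the commutation rule `[∂/∂u_i^{(m)}, ∂] = ∂/∂u_i^{(m-1)}`,
and `a_λ f` is polynomial in `λ` since only finitely many `∂f/∂u_i^{(m)}` are nonzero.
-/

open Polynomial Finset

theorem Derivation.sum_apply {R A M : Type*} [CommSemiring R] [CommSemiring A]
    [AddCommMonoid M] [Algebra R A] [Module A M] [Module R M] {ι : Type*} (s : Finset ι)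
    (D : ι → Derivation R A M) (a : A) : (∑ i ∈ s, D i) a = ∑ i ∈ s, D i a :=
  (congrFun (map_sum Derivation.coeFnAddMonoidHom D s) a).trans (Finset.sum_apply ..)

@[simps]
def Derivation.toLinearMapₗ {R A M : Type*} [CommSemiring R] [CommSemiring A] [AddCommMonoid M]
    [Algebra R A] [Module A M] [Module R M] [IsScalarTower R A M] :
    Derivation R A M →ₗ[R] A →ₗ[R] M where
  toFun D := D
  map_add' := Derivation.coe_add_linearMap
  map_smul' := Derivation.coe_smul_linearMap

theorem exists_forall_le_eq_zero_of_finite {I M : Type*} [Zero M] {g : I → ℕ → M}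
    (hg : {p : I × ℕ | g p.1 p.2 ≠ 0}.Finite) : ∃ N, ∀ i m, N ≤ m → g i m = 0 := by
  obtain ⟨N, hN⟩ := (hg.image Prod.snd).bddAbove
  refine ⟨N + 1, fun i m hm => ?_⟩
  by_contra hne
  have : m ≤ N := hN ⟨(i, m), hne, rfl⟩
  omega

namespace LambdaAction

variable {F : Type*} [Field F] {V : Type*} [CommRing V] [Algebra F V]

/-- If `u_λ = ∑ₘ λ^m d m`, then `(q(∂) u)_λ = q(-λ) u_λ`; this is its coefficient of `λ^n`. -/
def lambdaCoeff (d : ℕ → Derivation F V V) (n : ℕ) : F[X] →ₗ[F] Derivation F V V :=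
  ∑ k ∈ range (n + 1), (lcoeff F k).smulRight (((-1 : F) ^ k) • d (n - k))

section lambdaCoeff

variable (d : ℕ → Derivation F V V)

theorem lambdaCoeff_apply (n : ℕ) (q : F[X]) (f : V) :
    lambdaCoeff d n q f = ∑ k ∈ range (n + 1), ((-1 : F) ^ k * q.coeff k) • d (n - k) f := by
  simp [lambdaCoeff, LinearMap.sum_apply, Derivation.sum_apply, smul_smul, mul_comm]

theorem lambdaCoeff_one (n : ℕ) (f : V) : lambdaCoeff d n 1 f = d n f := by
  rw [lambdaCoeff_apply, sum_eq_single 0] <;> simp +contextual [coeff_one]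

theorem lambdaCoeff_zero_X_mul (q : F[X]) (f : V) : lambdaCoeff d 0 (X * q) f = 0 := by
  simp [lambdaCoeff_apply]

theorem lambdaCoeff_succ_X_mul (n : ℕ) (q : F[X]) (f : V) :
    lambdaCoeff d (n + 1) (X * q) f = -lambdaCoeff d n q f := by
  rw [lambdaCoeff_apply, sum_range_succ', lambdaCoeff_apply, ← sum_neg_distrib]
  simp [coeff_X_mul, pow_succ]

theorem map_lambdaCoeff (T : V →ₗ[F] V) (hT : ∀ m f, T (d m f) = d m (T f))
    (n : ℕ) (q : F[X]) (f : V) : T (lambdaCoeff d n q f) = lambdaCoeff d n q (T f) := by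
  simp [lambdaCoeff_apply, hT]

theorem lambdaCoeff_zero_map (T : V →ₗ[F] V) (hT : ∀ f, d 0 (T f) = T (d 0 f))
    (q : F[X]) (f : V) : lambdaCoeff d 0 q (T f) = T (lambdaCoeff d 0 q f) := by
  simp [lambdaCoeff_apply, hT]

theorem lambdaCoeff_succ_map (T : V →ₗ[F] V) (hT₀ : ∀ f, d 0 (T f) = T (d 0 f))
    (hT : ∀ m f, d (m + 1) (T f) = T (d (m + 1) f) + d m f) (n : ℕ) (q : F[X]) (f : V) :
    lambdaCoeff d (n + 1) q (T f) = T (lambdaCoeff d (n + 1) q f) + lambdaCoeff d n q f := by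
  have step : ∀ k ∈ range (n + 1), ((-1 : F) ^ k * q.coeff k) • d (n + 1 - k) (T f) =
      T (((-1 : F) ^ k * q.coeff k) • d (n + 1 - k) f) +
        ((-1 : F) ^ k * q.coeff k) • d (n - k) f := by
    intro k hk
    rw [Nat.sub_add_comm (mem_range_succ_iff.mp hk), hT, smul_add, map_smul]
  simp only [lambdaCoeff_apply, sum_range_succ _ (n + 1)]
  rw [sum_congr rfl step, sum_add_distrib, map_add, map_sum, Nat.sub_self, hT₀, map_smul]
  abel

theorem lambdaCoeff_eq_zero_of_le {f : V} {N : ℕ} (hN : ∀ m, N ≤ m → d m f = 0) {n : ℕ}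
    {q : F[X]} (hn : N + q.natDegree ≤ n) : lambdaCoeff d n q f = 0 := by
  rw [lambdaCoeff_apply]
  refine sum_eq_zero fun k _ => ?_
  by_cases hk : k ≤ q.natDegree
  · rw [hN _ (by omega), smul_zero]
  · rw [coeff_eq_zero_of_natDegree_lt (not_le.mp hk), mul_zero, zero_smul]

end lambdaCoeff

variable {I : Type*}

def lambdaAction (del : I → ℕ → Derivation F V V) (n : ℕ) :
    (I →₀ F[X]) →ₗ[F] Derivation F V V :=
  Finsupp.lsum F fun i => lambdaCoeff (del i) n

section lambdaAction

variable (del : I → ℕ → Derivation F V V)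

theorem lambdaAction_single (n : ℕ) (i : I) (q : F[X]) :
    lambdaAction del n (Finsupp.single i q) = lambdaCoeff (del i) n q :=
  Finsupp.lsum_single ..

variable {pa : (I →₀ F[X]) →ₗ[F] (I →₀ F[X])}

theorem lambdaAction_zero_comp
    (hpa : ∀ i q, pa (Finsupp.single i q) = Finsupp.single i (X * q)) :
    (lambdaAction del 0).comp pa = 0 :=
  Finsupp.lhom_ext fun i q => by
    ext f
    rw [LinearMap.comp_apply, hpa, lambdaAction_single, lambdaCoeff_zero_X_mul]
    rfl

theorem lambdaAction_succ_comp
    (hpa : ∀ i q, pa (Finsupp.single i q) = Finsupp.single i (X * q)) (n : ℕ) :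
    (lambdaAction del (n + 1)).comp pa = -lambdaAction del n :=
  Finsupp.lhom_ext fun i q => by
    ext f
    rw [LinearMap.comp_apply, hpa, lambdaAction_single, lambdaCoeff_succ_X_mul]
    simp [lambdaAction_single]

theorem map_lambdaAction (T : V →ₗ[F] V) (hT : ∀ i m f, T (del i m f) = del i m (T f))
    (n : ℕ) (a : I →₀ F[X]) (f : V) :
    T (lambdaAction del n a f) = lambdaAction del n a (T f) := by
  induction a using Finsupp.induction_linear with
  | zero => simp
  | add a b ha hb => simp [ha, hb]
  | single i q => rw [lambdaAction_single, map_lambdaCoeff _ T (hT i)]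

theorem lambdaAction_zero_map (T : V →ₗ[F] V) (hT : ∀ i f, del i 0 (T f) = T (del i 0 f))
    (a : I →₀ F[X]) (f : V) : lambdaAction del 0 a (T f) = T (lambdaAction del 0 a f) := by
  induction a using Finsupp.induction_linear with
  | zero => simp
  | add a b ha hb => simp [ha, hb]
  | single i q => rw [lambdaAction_single, lambdaCoeff_zero_map _ T (hT i)]

theorem lambdaAction_succ_map (T : V →ₗ[F] V) (hT₀ : ∀ i f, del i 0 (T f) = T (del i 0 f))
    (hT : ∀ i m f, del i (m + 1) (T f) = T (del i (m + 1) f) + del i m f)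
    (a : I →₀ F[X]) (n : ℕ) (f : V) :
    lambdaAction del (n + 1) a (T f) =
      T (lambdaAction del (n + 1) a f) + lambdaAction del n a f := by
  induction a using Finsupp.induction_linear with
  | zero => simp
  | add a b ha hb =>
    simp only [map_add, Derivation.add_apply, ha, hb]
    abel
  | single i q =>
    rw [lambdaAction_single, lambdaAction_single, lambdaCoeff_succ_map _ T (hT₀ i) (hT i)]

theorem lambdaAction_eq_zero_of_le {f : V} {N : ℕ} (hN : ∀ i m, N ≤ m → del i m f = 0)
    {n : ℕ} {a : I →₀ F[X]} (hn : N + a.support.sup (fun i => (a i).natDegree) ≤ n) :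
    lambdaAction del n a f = 0 := by
  rw [lambdaAction, Finsupp.lsum_apply, Finsupp.sum, Derivation.sum_apply]
  exact sum_eq_zero fun i hi =>
    lambdaCoeff_eq_zero_of_le _ (hN i) ((Nat.add_le_add_left (le_sup hi) N).trans hn)

end lambdaAction

end LambdaAction

open LambdaAction

theorem stmt13_general (F : Type*) [Field F]
    (I : Type*)
    -- 𝒱, an algebra of differential functions in the variables u_i, i ∈ I
    (V : Type*) [CommRing V] [Algebra F V]
    (Dv : Derivation F V V)  -- the derivation ∂ of 𝒱
    (del : I → ℕ → Derivation F V V)  -- the derivations ∂/∂u_i^{(n)}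
    (hcomm : ∀ (i j : I) (n m : ℕ) (f : V), del i n (del j m f) = del j m (del i n f))
    (hDdel0 : ∀ (i : I) (f : V), del i 0 (Dv f) = Dv (del i 0 f))
    (hDdel : ∀ (i : I) (n : ℕ) (f : V),
        del i (n + 1) (Dv f) = Dv (del i (n + 1) f) + del i n f)
    (hfin : ∀ f : V, {p : I × ℕ | del p.1 p.2 f ≠ 0}.Finite)
    -- ∂ on R = I →₀ 𝔽[X] is multiplication by X in each component:
    (pa : (I →₀ Polynomial F) →ₗ[F] (I →₀ Polynomial F))
    (hpa : ∀ (i : I) (q : Polynomial F),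
        pa (Finsupp.single i q) = Finsupp.single i (Polynomial.X * q)) :
    -- conclusion: an R-module structure on 𝒱, with u_{iλ} f = Σ_n λ^n ∂f/∂u_i^{(n)},
    -- acting by derivations
    ∃ actC : ℕ → (I →₀ Polynomial F) →ₗ[F] Module.End F V,
      -- the λ-action of the generators u_i
      (∀ (i : I) (n : ℕ) (f : V), actC n (Finsupp.single i 1) f = del i n f) ∧
      -- sesquilinearity (∂a)_λ f = −λ (a_λ f)
      (∀ (a : I →₀ Polynomial F) (n : ℕ) (f : V),
          actC n (pa a) f = if n = 0 then 0 else -(actC (n - 1) a f)) ∧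
      -- sesquilinearity a_λ (∂f) = (∂ + λ)(a_λ f)
      (∀ (a : I →₀ Polynomial F) (f : V), actC 0 a (Dv f) = Dv (actC 0 a f)) ∧
      (∀ (a : I →₀ Polynomial F) (n : ℕ) (f : V),
          actC (n + 1) a (Dv f) = Dv (actC (n + 1) a f) + actC n a f) ∧
      -- since the λ-bracket of R is zero:  a_λ (b_μ f) = b_μ (a_λ f)
      (∀ (a b : I →₀ Polynomial F) (m n : ℕ) (f : V),
          actC m a (actC n b f) = actC n b (actC m a f)) ∧
      -- the λ-action is by derivations of the product of 𝒱
      (∀ (a : I →₀ Polynomial F) (n : ℕ) (f g : V),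
          actC n a (f * g) = actC n a f * g + f * actC n a g) ∧
      -- the λ-action is polynomial in λ
      (∀ (a : I →₀ Polynomial F) (f : V), ∃ N, ∀ n, N ≤ n → actC n a f = 0) := by
  have del_commute (i : I) (k n : ℕ) (b : I →₀ Polynomial F) (f : V) :
      del i k (lambdaAction del n b f) = lambdaAction del n b (del i k f) :=
    map_lambdaAction del (del i k) (hcomm i · k ·) n b f
  refine ⟨fun n => Derivation.toLinearMapₗ ∘ₗ lambdaAction del n,
    fun i n f => (congr($(lambdaAction_single del n i 1) f)).trans (lambdaCoeff_one _ n f),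
    fun a n f => ?_, lambdaAction_zero_map del Dv hDdel0,
    lambdaAction_succ_map del Dv hDdel0 hDdel,
    fun a b m n f =>
      (map_lambdaAction del _ (fun i k f => (del_commute i k n b f).symm) m a f).symm,
    fun a n f g => ?_, fun a f => ?_⟩
  · rcases n with _ | n
    · simpa using congr($(lambdaAction_zero_comp del hpa) a f)
    · simpa using congr($(lambdaAction_succ_comp del hpa n) a f)
  · change lambdaAction del n a (f * g) = _
    rw [Derivation.leibniz, smul_eq_mul, smul_eq_mul, add_comm, mul_comm g]
    rfl
  · obtain ⟨N, hN⟩ := exists_forall_le_eq_zero_of_finite (g := fun i m => del i m f) (hfin f)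
    exact ⟨_, fun n hn => lambdaAction_eq_zero_of_le del hN hn⟩

/-- Let `R = ⊕_{i∈I} 𝔽[∂]u_i` be the free Lie conformal algebra with zero
`λ`-bracket (`I` finite; `R` is encoded as `I →₀ 𝔽[X]` with `∂` acting as multiplication
by `X` and `u_i = single i 1`), and let `𝒱` be an algebra of differential functions in
the variables `u_i`.  Then the formula `u_{iλ} f = Σ_{n≥0} λ^n ∂f/∂u_i^{(n)}` defines a
structure of an `R`-module on `𝒱` (here `actC n a` denotes the coefficient of `λ^n` in
`a_λ`), on which each `u_{iλ}` acts by derivations of the product of `𝒱`. -/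
theorem stmt13 (F : Type*) [Field F] [CharZero F]
    (I : Type*) [Fintype I]
    -- 𝒱, an algebra of differential functions in the variables u_i, i ∈ I
    (V : Type*) [CommRing V] [Algebra F V]
    (Dv : Derivation F V V)  -- the derivation ∂ of 𝒱
    (del : I → ℕ → Derivation F V V)  -- the derivations ∂/∂u_i^{(n)}
    (hcomm : ∀ (i j : I) (n m : ℕ) (f : V), del i n (del j m f) = del j m (del i n f))
    (hDdel0 : ∀ (i : I) (f : V), del i 0 (Dv f) = Dv (del i 0 f))
    (hDdel : ∀ (i : I) (n : ℕ) (f : V),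
        del i (n + 1) (Dv f) = Dv (del i (n + 1) f) + del i n f)
    (hfin : ∀ f : V, {p : I × ℕ | del p.1 p.2 f ≠ 0}.Finite)
    -- ∂ on R = I →₀ 𝔽[X] is multiplication by X in each component:
    (pa : (I →₀ Polynomial F) →ₗ[F] (I →₀ Polynomial F))
    (hpa : ∀ (i : I) (q : Polynomial F),
        pa (Finsupp.single i q) = Finsupp.single i (Polynomial.X * q)) :
    -- conclusion: an R-module structure on 𝒱, with u_{iλ} f = Σ_n λ^n ∂f/∂u_i^{(n)},
    -- acting by derivations
    ∃ actC : ℕ → (I →₀ Polynomial F) →ₗ[F] Module.End F V,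
      -- the λ-action of the generators u_i
      (∀ (i : I) (n : ℕ) (f : V), actC n (Finsupp.single i 1) f = del i n f) ∧
      -- sesquilinearity (∂a)_λ f = −λ (a_λ f)
      (∀ (a : I →₀ Polynomial F) (n : ℕ) (f : V),
          actC n (pa a) f = if n = 0 then 0 else -(actC (n - 1) a f)) ∧
      -- sesquilinearity a_λ (∂f) = (∂ + λ)(a_λ f)
      (∀ (a : I →₀ Polynomial F) (f : V), actC 0 a (Dv f) = Dv (actC 0 a f)) ∧
      (∀ (a : I →₀ Polynomial F) (n : ℕ) (f : V),
          actC (n + 1) a (Dv f) = Dv (actC (n + 1) a f) + actC n a f) ∧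
      -- since the λ-bracket of R is zero:  a_λ (b_μ f) = b_μ (a_λ f)
      (∀ (a b : I →₀ Polynomial F) (m n : ℕ) (f : V),
          actC m a (actC n b f) = actC n b (actC m a f)) ∧
      -- the λ-action is by derivations of the product of 𝒱
      (∀ (a : I →₀ Polynomial F) (n : ℕ) (f g : V),
          actC n a (f * g) = actC n a f * g + f * actC n a g) ∧
      -- the λ-action is polynomial in λ
      (∀ (a : I →₀ Polynomial F) (f : V), ∃ N, ∀ n, N ≤ n → actC n a f = 0) :=
  stmt13_general F I V Dv del hcomm hDdel0 hDdel hfin pa hpa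
end
end

section
/- Let 𝒱 be an algebra of differential functions and ω̃ ∈ Ω̃^k(𝒱) a k-form. For an evolutionary k-vector field X (i.e., ∂(X) = 0), the value S_{∂ω̃}(X) := (−1)^{k(k−1)/2} ι_X(∂ω̃) lies in ∂𝒱. Consequently the pairing ω̃ ↦ S_{ω̃} descends to a map Ω^k(𝒱) = Ω̃^k(𝒱)/∂Ω̃^k(𝒱) → Hom(Ω_k(𝒱), 𝒱/∂𝒱). -/
noncomputable section

/-- Let `𝒱` be an algebra of differential functions and `ω̃ ∈ Ω̃^k(𝒱)` a
`k`-form in the de Rham complex `Ω` (with `∂` acting as `P`, `P(ε f) = ε (∂ f)`).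
k-vector fields `X` are encoded by an abstract module `PV` together with the contraction
map `c` and the action `pd` of `∂` on polyvector fields, related by
`[∂, ι_X] = ι_{∂(X)}`.  For an evolutionary `k`-vector field `X` (i.e. `∂(X) = 0`), and
`ω̃` such that `ι_X ω̃ ∈ 𝒱` (the degrees match), the value
`S_{∂ω̃}(X) = (−1)^{k(k−1)/2} ι_X(∂ ω̃)` lies in `∂𝒱`.  (Consequently `ω̃ ↦ S_{ω̃}`
descends to a map `Ω̃^k/∂Ω̃^k → Hom(Ω_k(𝒱), 𝒱/∂𝒱)`.) -/
theorem stmt17 (F : Type*) [Field F] [CharZero F]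
    (V : Type*) [CommRing V] [Algebra F V]
    (Dv : Derivation F V V)  -- the derivation ∂ of 𝒱
    (Ω : Type*) [Ring Ω] [Algebra F Ω]
    (ε : V →ₐ[F] Ω)  -- the embedding of 𝒱 = Ω̃⁰ in Ω̃•
    (P : Module.End F Ω)  -- the action of ∂ on the de Rham complex
    (hPε : ∀ f : V, P (ε f) = ε (Dv f))
    (k : ℕ)
    -- the space of k-vector fields, with contraction map and ∂-action
    (PV : Type*) [AddCommGroup PV] [Module F PV]
    (c : PV →ₗ[F] Module.End F Ω)
    (pd : PV →ₗ[F] PV)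
    (hc : ∀ Xp : PV, P * c Xp - c Xp * P = c (pd Xp))  -- [∂, ι_X] = ι_{∂(X)}
    (ω : Ω) (Xp : PV)
    (hXev : pd Xp = 0)  -- X is evolutionary
    (hdeg : ∃ v : V, c Xp ω = ε v)  -- ι_X ω̃ ∈ 𝒱 (degree k against degree k)
    :
    ∃ v : V, ((-1 : F) ^ (k * (k - 1) / 2)) • c Xp (P ω) = ε (Dv v) := by
  obtain ⟨v, hv⟩ := hdeg
  have hcomm : P * c Xp - c Xp * P = 0 := by rw [hc, hXev, map_zero]
  have hPc : P (c Xp ω) = c Xp (P ω) := by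
    have := congrArg (fun e : Module.End F Ω => e ω) hcomm
    simpa [Module.End.mul_apply, sub_eq_zero] using this
  refine ⟨((-1 : F) ^ (k * (k - 1) / 2)) • v, ?_⟩
  rw [Dv.map_smul, map_smul, ← hPε, ← hv, hPc]
end
end
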